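/- arXiv:2306.09835 — 2 statements merged into one kernel-verified Lean document; each statement's English description precedes it below -/
import Mathlib

section
/- Let C be a finite set of candidates, f : 2^C × L(C) → ℝ≥0 be separable, and let μ, μ̂ be generative models such that F is (β₁,γ₁) order preserving between μ and μ̂₁ and (β₂,γ₂) order preserving between μ and μ̂₂. Then for any δ ∈ (0,1), F is (min{β₁,β₂}, max{γ₁,γ₂}) order preserving between μ and the mixture δ·μ̂₁ + (1−δ)·μ̂₂. -/
/-- `Eμ c S` denotes the expected marginal contribution `E_μ[f_S(c, ≻)]` of candidate `c`
to committee `S` under generative model `μ` (nonnegative since `f` maps to `ℝ≥0`). -/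
def OrderPreservingBetween {C : Type*} [DecidableEq C]
    (sameGroup : C → C → Prop) (Eμ Eν : C → Finset C → ℝ) (β γ : ℝ) : Prop :=
  ∀ c c' : C, c ≠ c' → sameGroup c c' → ∀ S : Finset C, c ∉ S → c' ∉ S →
    (β * Eμ c' S ≥ Eμ c S ∧ Eμ c S > 0) → γ * Eν c' S ≥ Eν c S

theorem stmt_5 {C : Type*} [Fintype C] [DecidableEq C]
    (sameGroup : C → C → Prop)
    (Eμ Eν₁ Eν₂ : C → Finset C → ℝ)
    (hEμ : ∀ c S, 0 ≤ Eμ c S) (hEν₁ : ∀ c S, 0 ≤ Eν₁ c S) (hEν₂ : ∀ c S, 0 ≤ Eν₂ c S)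
    (β₁ β₂ γ₁ γ₂ δ : ℝ)
    (hβ₁ : β₁ ∈ Set.Icc (0 : ℝ) 1) (hβ₂ : β₂ ∈ Set.Icc (0 : ℝ) 1)
    (hγ₁ : γ₁ ∈ Set.Icc (0 : ℝ) 1) (hγ₂ : γ₂ ∈ Set.Icc (0 : ℝ) 1)
    (hδ : δ ∈ Set.Ioo (0 : ℝ) 1)
    (h₁ : OrderPreservingBetween sameGroup Eμ Eν₁ β₁ γ₁)
    (h₂ : OrderPreservingBetween sameGroup Eμ Eν₂ β₂ γ₂) :
    OrderPreservingBetween sameGroup Eμ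
      (fun c S => δ * Eν₁ c S + (1 - δ) * Eν₂ c S)
      (min β₁ β₂) (max γ₁ γ₂) := by
  intro c c' hne hg S hcS hc'S ⟨hmin, hpos⟩
  have hEμ' := hEμ c' S
  have g₁ := h₁ c c' hne hg S hcS hc'S ⟨le_trans hmin (mul_le_mul_of_nonneg_right (min_le_left β₁ β₂) hEμ'), hpos⟩
  have g₂ := h₂ c c' hne hg S hcS hc'S ⟨le_trans hmin (mul_le_mul_of_nonneg_right (min_le_right β₁ β₂) hEμ'), hpos⟩
  have n₁ := hEν₁ c' S
  have n₂ := hEν₂ c' S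
  have m₁ : γ₁ ≤ max γ₁ γ₂ := le_max_left _ _
  have m₂ : γ₂ ≤ max γ₁ γ₂ := le_max_right _ _
  have hδ₁ := hδ.1
  have hδ₂ := hδ.2
  simp only [ge_iff_le]
  nlinarith [mul_le_mul_of_nonneg_right m₁ n₁, mul_le_mul_of_nonneg_right m₂ n₂]
end

section
/- Near-optimality of swapped benchmark for submodular F: let F : 2^C → ℝ≥0 be monotone submodular, let M, S* ⊆ C with |M| = |S*| = k, write M∖S* = {d₁,...,d_{k−a}} and S*∖M = {c₁,...,c_{k−a}}. If for every set T of size at most k and every i, F_T(d_i) ≥ F_T(c_i) − ε (where F_T(x) = F(T∪{x}) − F(T)), then F(M) ≥ F(S*) − (k−a)·ε. -/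
/-- Near-optimality of the benchmark via a swapping argument: `F` monotone submodular and
nonnegative, `M` and `S*` of size `k` with `a = |M ∩ S*|`, `M∖S* = {d 0,…,d (j-1)}` and
`S*∖M = {c 0,…,c (j-1)}` where `j = k − a`. If for every `T` of size at most `k` and every
`i`, `F_T(d i) ≥ F_T(c i) − ε`, then `F(M) ≥ F(S*) − (k−a)·ε`. -/
theorem stmt_19 {C : Type*} [Fintype C] [DecidableEq C]
    (F : Finset C → ℝ) (hnonneg : ∀ S, 0 ≤ F S)
    (hmono : ∀ S T : Finset C, S ⊆ T → F S ≤ F T)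
    (hsub : ∀ S T : Finset C, S ⊆ T → ∀ c ∉ T,
      F (insert c T) - F T ≤ F (insert c S) - F S)
    (k : ℕ) (M Sstar : Finset C) (hM : M.card = k) (hSstar : Sstar.card = k)
    (j : ℕ) (hj : j = k - (M ∩ Sstar).card)
    (d c : Fin j → C)
    (hdinj : Function.Injective d) (hcinj : Function.Injective c)
    (hd : Finset.image d Finset.univ = M \ Sstar)
    (hc : Finset.image c Finset.univ = Sstar \ M)
    (ε : ℝ) (hε : 0 ≤ ε)
    (hswap : ∀ T : Finset C, T.card ≤ k → ∀ i : Fin j,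
      F (insert (d i) T) - F T ≥ F (insert (c i) T) - F T - ε) :
    F M ≥ F Sstar - (j : ℝ) * ε := by
  classical
  -- ranges of c and d
  have hcmem : ∀ i : Fin j, c i ∈ Sstar \ M := fun i =>
    hc ▸ Finset.mem_image_of_mem c (Finset.mem_univ i)
  have hdmem : ∀ i : Fin j, d i ∈ M \ Sstar := fun i =>
    hd ▸ Finset.mem_image_of_mem d (Finset.mem_univ i)
  set Ic : ℕ → Finset C := fun t =>
    (Finset.univ.filter (fun i : Fin j => i.val < t)).image c with hIcdef
  set Id : ℕ → Finset C := fun t =>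
    (Finset.univ.filter (fun i : Fin j => i.val < t)).image d with hIddef
  set A : ℕ → Finset C := fun t => (Sstar \ Ic t) ∪ Id t with hAdef
  have hfiltercard : ∀ t, t ≤ j →
      (Finset.univ.filter (fun i : Fin j => i.val < t)).card = t := by
    intro t ht
    rw [Finset.card_filter, Fin.sum_univ_eq_sum_range (fun n => if n < t then 1 else 0),
      ← Finset.card_filter]
    rw [show (Finset.range j).filter (fun n => n < t) = Finset.range t by
      ext n; simp only [Finset.mem_filter, Finset.mem_range]; omega, Finset.card_range]
  have hIcsub : ∀ t, Ic t ⊆ Sstar := by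
    intro t x hx
    simp only [hIcdef, Finset.mem_image] at hx
    obtain ⟨i, _, rfl⟩ := hx
    exact (Finset.mem_sdiff.1 (hcmem i)).1
  have hcardA : ∀ t, t ≤ j → (A t).card ≤ k := by
    intro t ht
    calc (A t).card ≤ (Sstar \ Ic t).card + (Id t).card := Finset.card_union_le _ _
      _ ≤ (Sstar.card - (Ic t).card) + (Id t).card := by
          rw [Finset.card_sdiff_of_subset (hIcsub t)]
      _ ≤ (k - t) + t := by
          have h1 : (Ic t).card = t := by
            rw [hIcdef]
            rw [Finset.card_image_of_injective _ hcinj, hfiltercard t ht]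
          have h2 : (Id t).card ≤ t := by
            calc (Id t).card ≤ _ := Finset.card_image_le
              _ = t := hfiltercard t ht
          omega
      _ ≤ k := by omega
  -- step
  have hstep : ∀ t, t < j → F (A (t + 1)) ≥ F (A t) - ε := by
    intro t ht
    set i : Fin j := ⟨t, ht⟩ with hi
    have hival : (i : ℕ) = t := rfl
    have hfi : Finset.univ.filter (fun i' : Fin j => i'.val < t + 1)
        = insert i (Finset.univ.filter (fun i' : Fin j => i'.val < t)) := by
      ext i'
      simp only [Finset.mem_filter, Finset.mem_univ, true_and, Finset.mem_insert]
      constructor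
      · intro h
        rcases Nat.lt_succ_iff_lt_or_eq.1 h with h | h
        · exact Or.inr h
        · exact Or.inl (Fin.ext h)
      · rintro (rfl | h)
        · rw [hival]; omega
        · omega
    have hIc1 : Ic (t + 1) = insert (c i) (Ic t) := by
      rw [hIcdef]; simp only; rw [hfi, Finset.image_insert]
    have hId1 : Id (t + 1) = insert (d i) (Id t) := by
      rw [hIddef]; simp only; rw [hfi, Finset.image_insert]
    have hciId : c i ∉ Id t := by
      intro h
      simp only [hIddef, Finset.mem_image] at h
      obtain ⟨i', _, hi'⟩ := h
      have h1 := hdmem i'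
      have h2 := hcmem i
      rw [← hi'] at h2
      simp only [Finset.mem_sdiff] at h1 h2
      exact h1.2 h2.1
    have hciIc : c i ∉ Ic t := by
      intro h
      simp only [hIcdef, Finset.mem_image, Finset.mem_filter] at h
      obtain ⟨i', ⟨_, hi'⟩, hci'⟩ := h
      have hii : i' = i := hcinj hci'
      rw [hii, hival] at hi'
      exact lt_irrefl _ hi'
    have hciA : c i ∈ A t := by
      simp only [hAdef, Finset.mem_union, Finset.mem_sdiff]
      exact Or.inl ⟨(Finset.mem_sdiff.1 (hcmem i)).1, hciIc⟩
    set T : Finset C := A t \ {c i} with hT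
    have hTcard : T.card ≤ k :=
      le_trans (Finset.card_le_card (Finset.sdiff_subset)) (hcardA t (le_of_lt ht))
    have hAeq : insert (c i) T = A t := by
      rw [hT, Finset.sdiff_singleton_eq_erase, Finset.insert_erase hciA]
    have hA1eq : A (t + 1) = insert (d i) T := by
      rw [hT]
      show Sstar \ Ic (t + 1) ∪ Id (t + 1) = insert (d i) ((Sstar \ Ic t ∪ Id t) \ {c i})
      rw [hIc1, hId1, Finset.union_sdiff_distrib,
        Finset.sdiff_singleton_eq_erase, Finset.sdiff_singleton_eq_erase,
        Finset.erase_eq_of_notMem hciId, Finset.sdiff_insert, Finset.union_insert]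
    have h := hswap T hTcard i
    rw [hAeq] at h
    rw [hA1eq]
    linarith
  -- induction
  have hind : ∀ t, t ≤ j → F (A t) ≥ F Sstar - (t : ℝ) * ε := by
    intro t
    induction t with
    | zero =>
      intro _
      have hA0 : A 0 = Sstar := by
        simp [hAdef, hIcdef, hIddef]
      rw [hA0]; simp
    | succ n ih =>
      intro hn
      have h1 := ih (by omega)
      have h2 := hstep n (by omega)
      push_cast
      nlinarith
  have hAj : A j = M := by
    have hfj : Finset.univ.filter (fun i' : Fin j => i'.val < j) = Finset.univ := by
      ext i'; simp [i'.isLt]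
    rw [hAdef]
    simp only [hIcdef, hIddef]
    rw [hfj, hc, hd]
    ext x
    simp only [Finset.mem_union, Finset.mem_sdiff, not_and, not_not]
    tauto
  have := hind j le_rfl
  rw [hAj] at this
  exact this
end
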